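/- Let X be a Tychonoff space. Then the free topological vector space V(X) is a Fréchet–Urysohn space if and only if X is finite; moreover, V(X) is metrizable if and only if X is finite. -/

import Mathlib

/-!
For finite `X`, the extension of `x ↦ eₓ` identifies `V` with `ℝ^X`; it is injective because the
uniqueness clause, tested against an indiscrete copy of `ℝ`, forces `i(X)` to span `V`.

For infinite `X`, take continuous `ψₗ` with pairwise disjoint supports and points `yₗ` with
`ψₖ(yₗ) = δₖₗ`. Then `0` lies in the closure of `A = {n⁻¹ y₀ + m⁻¹ (y₁ + ⋯ + yₙ)}`, but no
sequence `aₚ` in `A` tends to `0`. The extension of `ψ₀` sends `aₚ` to `nₚ⁻¹`, forcing `nₚ → ∞`.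
Then choose weights `Ψₗ ≥ mₚ` whenever `nₚ ≤ 2l` (finitely many `p`), and extend `x ↦ (ψₗ x)ₗ` to
a continuous linear map into `ℕ →₀ ℝ` with the F-norm `∑ₗ min 1 (Ψₗ |vₗ|) / (l + 1)`: the basis
vectors tend to `0` there, so the map is continuous, but every `aₚ` is sent to a vector of norm at
least `1/4`, because its coordinates `mₚ⁻¹` on `(nₚ/2, nₚ]` are not damped. Metrizable spaces are
Fréchet–Urysohn, which links the two cases.
-/

open Topology Set

universe u v w

/-- `IsFreeTVS V i` says that the (real) topological vector space `V` together with the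
continuous map `i : X → V` is the free topological vector space over `X`: every continuous
map from `X` to a topological vector space `E` extends uniquely to a continuous linear
operator `V →L[ℝ] E`. -/
def IsFreeTVS {X : Type u} [TopologicalSpace X] (V : Type v) [AddCommGroup V] [Module ℝ V]
    [TopologicalSpace V] [IsTopologicalAddGroup V] [ContinuousSMul ℝ V] (i : X → V) : Prop :=
  Continuous i ∧
    ∀ (E : Type w) [AddCommGroup E] [Module ℝ E] [TopologicalSpace E]
      [IsTopologicalAddGroup E] [ContinuousSMul ℝ E] (f : X → E),
      Continuous f → ∃! g : V →L[ℝ] E, ∀ x, g (i x) = f x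

/-- `SPn i n` is the set `SP_n(X) = {λ₁x₁ + ⋯ + λₙxₙ : λᵢ ∈ [−n,n], xᵢ ∈ X}` inside `V`. -/
def SPn {X : Type u} {V : Type v} [AddCommGroup V] [Module ℝ V]
    (i : X → V) (n : ℕ) : Set V :=
  {v | ∃ (c : Fin n → ℝ) (x : Fin n → X),
    (∀ j, c j ∈ Set.Icc (-(n : ℝ)) (n : ℝ)) ∧ v = ∑ j, c j • i (x j)}

open Filter

instance {E : Type*} [AddCommGroup E] [TopologicalSpace E] [IsTopologicalAddGroup E] :
    IsTopologicalAddGroup (ULift.{w} E) where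

instance {R E : Type*} [TopologicalSpace R] [TopologicalSpace E] [SMul R E] [ContinuousSMul R E] :
    ContinuousSMul R (ULift.{w} E) :=
  ⟨continuous_uliftUp.comp (continuous_fst.smul (continuous_uliftDown.comp continuous_snd))⟩

def IndiscreteReal : Type := ℝ

noncomputable instance : AddCommGroup IndiscreteReal := inferInstanceAs (AddCommGroup ℝ)
noncomputable instance : Module ℝ IndiscreteReal := inferInstanceAs (Module ℝ ℝ)
instance : TopologicalSpace IndiscreteReal := ⊤
instance : IsTopologicalAddGroup IndiscreteReal where
  continuous_add := continuous_top
  continuous_neg := continuous_top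
instance : ContinuousSMul ℝ IndiscreteReal := ⟨continuous_top⟩

theorem min_one_add_le {x y : ℝ} (hx : 0 ≤ x) (hy : 0 ≤ y) :
    min 1 (x + y) ≤ min 1 x + min 1 y := by
  simp only [min_def]
  split_ifs <;> linarith

theorem min_one_mul_le {K : ℝ} (hK : 1 ≤ K) (x : ℝ) : min 1 (K * x) ≤ K * min 1 x := by
  simp only [min_def]
  split_ifs <;> nlinarith

noncomputable def weightedNorm (Ψ : ℕ → ℕ) (v : ℕ →₀ ℝ) : ℝ :=
  v.sum fun l t => min 1 (Ψ l * |t|) / (l + 1)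

section weightedNorm

variable {Ψ : ℕ → ℕ}

theorem weightedNorm_eq_sum {v : ℕ →₀ ℝ} {s : Finset ℕ} (hs : v.support ⊆ s) :
    weightedNorm Ψ v = ∑ l ∈ s, min 1 (Ψ l * |v l|) / (l + 1) :=
  Finsupp.sum_of_support_subset v hs _ fun _ _ => by simp

theorem sum_le_weightedNorm (v : ℕ →₀ ℝ) (s : Finset ℕ) :
    ∑ l ∈ s, min 1 (Ψ l * |v l|) / (l + 1) ≤ weightedNorm Ψ v := by
  classical
  rw [weightedNorm_eq_sum (Finset.subset_union_right (s₁ := s))]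
  exact Finset.sum_le_sum_of_subset_of_nonneg Finset.subset_union_left fun _ _ _ => by positivity

theorem weightedNorm_add_le (v w : ℕ →₀ ℝ) :
    weightedNorm Ψ (v + w) ≤ weightedNorm Ψ v + weightedNorm Ψ w := by
  classical
  rw [weightedNorm_eq_sum Finsupp.support_add, weightedNorm_eq_sum Finset.subset_union_left,
    weightedNorm_eq_sum Finset.subset_union_right, ← Finset.sum_add_distrib]
  gcongr with l
  rw [← add_div]
  gcongr
  calc min 1 (Ψ l * |(v + w) l|) ≤ min 1 (Ψ l * |v l| + Ψ l * |w l|) := by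
        rw [Finsupp.add_apply, ← mul_add]
        gcongr
        exact abs_add_le _ _
    _ ≤ _ := min_one_add_le (by positivity) (by positivity)

theorem weightedNorm_neg (v : ℕ →₀ ℝ) : weightedNorm Ψ (-v) = weightedNorm Ψ v := by
  rw [weightedNorm_eq_sum (Finsupp.support_neg v).le, weightedNorm_eq_sum le_rfl]
  simp

theorem weightedNorm_smul_le {K c : ℝ} (hK : 1 ≤ K) (hc : |c| ≤ K) (v : ℕ →₀ ℝ) :
    weightedNorm Ψ (c • v) ≤ K * weightedNorm Ψ v := by
  classical
  rw [weightedNorm_eq_sum Finsupp.support_smul, weightedNorm_eq_sum le_rfl, Finset.mul_sum]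
  gcongr with l
  rw [← mul_div_assoc]
  gcongr
  calc min 1 (Ψ l * |(c • v) l|) ≤ min 1 (K * (Ψ l * |v l|)) := by
        rw [Finsupp.smul_apply, smul_eq_mul, abs_mul, mul_left_comm]
        gcongr
    _ ≤ _ := min_one_mul_le hK _

theorem weightedNorm_smul_le_abs_mul (c : ℝ) (v : ℕ →₀ ℝ) :
    weightedNorm Ψ (c • v) ≤ |c| * v.sum fun l t => Ψ l * |t| / (l + 1) := by
  classical
  rw [weightedNorm_eq_sum Finsupp.support_smul,
    Finsupp.sum_of_support_subset v le_rfl _ fun _ _ => by simp, Finset.mul_sum]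
  gcongr with l
  rw [← mul_div_assoc]
  gcongr
  calc min 1 (Ψ l * |(c • v) l|) ≤ Ψ l * |(c • v) l| := min_le_right _ _
    _ = |c| * (Ψ l * |v l|) := by rw [Finsupp.smul_apply, smul_eq_mul, abs_mul]; ring

end weightedNorm

noncomputable def weightedSeminorm (Ψ : ℕ → ℕ) : AddGroupSeminorm (ℕ →₀ ℝ) where
  toFun := weightedNorm Ψ
  map_zero' := by simp [weightedNorm]
  add_le' := weightedNorm_add_le
  neg' := weightedNorm_neg

def WeightedFinsupp (_Ψ : ℕ → ℕ) : Type := ℕ →₀ ℝ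

namespace WeightedFinsupp

variable {Ψ : ℕ → ℕ}

noncomputable instance : AddCommGroup (WeightedFinsupp Ψ) :=
  inferInstanceAs (AddCommGroup (ℕ →₀ ℝ))
noncomputable instance : Module ℝ (WeightedFinsupp Ψ) :=
  inferInstanceAs (Module ℝ (ℕ →₀ ℝ))
noncomputable instance : SeminormedAddCommGroup (WeightedFinsupp Ψ) :=
  @AddGroupSeminorm.toSeminormedAddCommGroup _ _ (weightedSeminorm Ψ)

noncomputable def toFinsupp : WeightedFinsupp Ψ ≃ₗ[ℝ] (ℕ →₀ ℝ) :=
  LinearEquiv.refl ℝ _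

theorem norm_def (v : WeightedFinsupp Ψ) : ‖v‖ = weightedNorm Ψ (toFinsupp v) := rfl

instance : ContinuousSMul ℝ (WeightedFinsupp Ψ) := by
  refine .of_nhds_zero ?_ (fun v => ?_) (fun c => ?_)
  · have : ∀ᶠ c : ℝ in 𝓝 0, |c| ≤ 1 := mem_of_superset
      (Metric.closedBall_mem_nhds (0 : ℝ) one_pos) fun c hc => by simpa using hc
    refine squeeze_zero_norm' ((this.prod_inl _).mono fun p hp => ?_)
      (tendsto_norm_zero.comp tendsto_snd)
    simpa [norm_def] using weightedNorm_smul_le le_rfl hp (toFinsupp p.2)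
  · refine squeeze_zero_norm (fun c => ?_) (by
      simpa using (continuous_abs.tendsto (0 : ℝ)).mul_const
        ((toFinsupp v).sum fun l t => Ψ l * |t| / (l + 1)))
    simpa [norm_def] using weightedNorm_smul_le_abs_mul c (toFinsupp v)
  · refine squeeze_zero_norm (fun v => ?_)
      (by simpa using tendsto_norm_zero.const_mul (max 1 |c|))
    simpa [norm_def] using weightedNorm_smul_le (le_max_left _ _) (le_max_right _ _) (toFinsupp v)

theorem norm_le_of_support_subsingleton {v : WeightedFinsupp Ψ} {L : ℕ}
    (hv : ((toFinsupp v).support : Set ℕ).Subsingleton)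
    (hL : ∀ l ∈ (toFinsupp v).support, L ≤ l) :
    ‖v‖ ≤ 1 / (L + 1) := by
  have hcard : ((toFinsupp v).support.card : ℝ) ≤ 1 := by
    exact_mod_cast Finset.card_le_one_iff_subsingleton_coe.2 hv.coe_sort
  calc ‖v‖ ≤ (toFinsupp v).support.card • (1 / (L + 1) : ℝ) := by
        rw [norm_def, weightedNorm]
        refine Finset.sum_le_card_nsmul _ _ _ fun l hl => ?_
        exact div_le_div₀ zero_le_one (min_le_left _ _) (by positivity)
          (by exact_mod_cast Nat.add_le_add_right (hL l hl) 1)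
    _ ≤ 1 / (L + 1) := by
        rw [nsmul_eq_mul]
        exact mul_le_of_le_one_left (by positivity) hcard

theorem continuous_ofSupportFinite {X : Type*} [TopologicalSpace X] {ψ : ℕ → X → ℝ}
    (hψ : ∀ l, Continuous (ψ l))
    (hsupp : ∀ x, (Function.support fun l => ψ l x).Subsingleton) :
    Continuous fun x => (toFinsupp.symm (Finsupp.ofSupportFinite _ (hsupp x).finite) :
      WeightedFinsupp Ψ) := by
  set f := fun x => (toFinsupp.symm (Finsupp.ofSupportFinite _ (hsupp x).finite) :
      WeightedFinsupp Ψ)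
  let F : ℕ → X → WeightedFinsupp Ψ := fun L x =>
    ∑ l ∈ Finset.range L, ψ l x • toFinsupp.symm (Finsupp.single l 1)
  have hF : ∀ L, Continuous (F L) := fun L =>
    continuous_finsetSum _ fun l _ => (hψ l).smul continuous_const
  have htail : ∀ L x l, toFinsupp (f x - F L x) l = if l < L then 0 else ψ l x := by
    intro L x l
    simp [f, F, Finsupp.single_apply, Finsupp.ofSupportFinite_coe]
    split_ifs <;> ring
  have hdist : ∀ L x, ‖f x - F L x‖ ≤ 1 / (L + 1) := by
    intro L x
    have htail_supp : ∀ l ∈ (toFinsupp (f x - F L x)).support, L ≤ l ∧ ψ l x ≠ 0 := by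
      intro l hl
      rw [Finsupp.mem_support_iff, htail] at hl
      split_ifs at hl with h
      exacts [absurd rfl hl, ⟨not_lt.1 h, hl⟩]
    exact norm_le_of_support_subsingleton ((hsupp x).anti fun l hl => (htail_supp l hl).2)
      fun l hl => (htail_supp l hl).1
  refine (Metric.tendstoUniformly_iff.2 fun ε hε => ?_).continuous
    (Frequently.of_forall (f := atTop) hF)
  obtain ⟨L, hL⟩ := exists_nat_one_div_lt hε
  filter_upwards [eventually_ge_atTop L] with L' hL' x
  rw [dist_eq_norm]
  refine (hdist L' x).trans_lt (lt_of_le_of_lt ?_ hL)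
  gcongr

theorem one_div_four_le_norm {v : WeightedFinsupp Ψ} {n m : ℕ} (hn : 0 < n) (hm : 0 < m)
    (hv : ∀ l ∈ Finset.Ioc (n / 2) n, toFinsupp v l = (m : ℝ)⁻¹)
    (hΨ : ∀ l ∈ Finset.Ioc (n / 2) n, m ≤ Ψ l) : 1 / 4 ≤ ‖v‖ :=
  calc (1 / 4 : ℝ) ≤ (n - n / 2 : ℕ) * (1 / (n + 1)) := by
        rw [mul_one_div, le_div_iff₀ (by positivity)]
        have h : ((n + 1 : ℕ) : ℝ) ≤ (4 * (n - n / 2) : ℕ) := by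
          exact_mod_cast (by omega : n + 1 ≤ 4 * (n - n / 2))
        push_cast at h
        linarith
    _ = ∑ l ∈ Finset.Ioc (n / 2) n, 1 / ((n : ℝ) + 1) := by simp
    _ ≤ ∑ l ∈ Finset.Ioc (n / 2) n, min 1 (Ψ l * |toFinsupp v l|) / (l + 1) := by
        gcongr with l hl
        · rw [hv l hl, abs_inv, Nat.abs_cast, min_eq_left]
          rw [← div_eq_mul_inv, one_le_div (by positivity)]
          exact_mod_cast hΨ l hl
        · exact_mod_cast (Finset.mem_Ioc.1 hl).2
    _ ≤ ‖v‖ := sum_le_weightedNorm _ _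

end WeightedFinsupp

section fanPoint

variable {V : Type*} [AddCommGroup V] [Module ℝ V]

noncomputable def fanPoint (u : V) (w : ℕ → V) (n m : ℕ) : V :=
  (n : ℝ)⁻¹ • u + (m : ℝ)⁻¹ • ∑ l ∈ Finset.Icc 1 n, w l

theorem map_fanPoint {W : Type*} [AddCommGroup W] [Module ℝ W] (φ : V →ₗ[ℝ] W) (u : V)
    (w : ℕ → V) (n m : ℕ) : φ (fanPoint u w n m) = fanPoint (φ u) (φ ∘ w) n m := by
  simp [fanPoint, map_sum]

theorem zero_mem_closure_fanPoint [TopologicalSpace V] [IsTopologicalAddGroup V]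
    [ContinuousSMul ℝ V] (u : V) (w : ℕ → V) :
    (0 : V) ∈ closure {v | ∃ n m, 0 < n ∧ 0 < m ∧ fanPoint u w n m = v} := by
  set A := {v | ∃ n m, 0 < n ∧ 0 < m ∧ fanPoint u w n m = v}
  have h_inv_smul (v : V) : Tendsto (fun n : ℕ => (n : ℝ)⁻¹ • v) atTop (𝓝 0) := by
    simpa using (tendsto_inv_atTop_nhds_zero_nat (𝕜 := ℝ)).smul_const v
  have h_mem (n : ℕ) (hn : 0 < n) : (n : ℝ)⁻¹ • u ∈ closure A := by
    have := (tendsto_const_nhds (x := (n : ℝ)⁻¹ • u)).add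
      (h_inv_smul (∑ l ∈ Finset.Icc 1 n, w l))
    rw [add_zero] at this
    exact mem_closure_of_tendsto this
      ((eventually_gt_atTop 0).mono fun m hm => ⟨n, m, hn, hm, rfl⟩)
  simpa using mem_closure_of_tendsto (h_inv_smul u) ((eventually_gt_atTop 0).mono h_mem)

end fanPoint

theorem exists_seq_bump_functions (X : Type*) [TopologicalSpace X] [T35Space X] [Infinite X] :
    ∃ (y : ℕ → X) (ψ : ℕ → X → ℝ), (∀ l, Continuous (ψ l)) ∧
      (∀ k l, ψ k (y l) = if k = l then 1 else 0) ∧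
      ∀ x, (Function.support fun l => ψ l x).Subsingleton := by
  obtain ⟨U, hU_inf, hU_open, hU_disj⟩ := exists_seq_infinite_isOpen_pairwise_disjoint X
  choose y hy using fun l => (hU_inf l).nonempty
  choose f hf_cont hf_y hf_compl using fun l => CompletelyRegularSpace.completely_regular (y l)
    (U l)ᶜ (hU_open l).isClosed_compl (not_not_intro (hy l))
  let ψ l x := 1 - (f l x : ℝ)
  have hψ_compl : ∀ l x, x ∉ U l → ψ l x = 0 := fun l x hx => by simp [ψ, hf_compl l hx]
  have hU_of_ne : ∀ l x, ψ l x ≠ 0 → x ∈ U l := fun l x => not_imp_comm.1 (hψ_compl l x)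
  refine ⟨y, ψ, fun l => by fun_prop, fun k l => ?_, fun x k hk l hl => ?_⟩
  · split_ifs with hkl
    · simp [ψ, hkl, hf_y]
    · exact hψ_compl k (y l) fun hk => Set.disjoint_left.1 (hU_disj hkl) hk (hy l)
  · exact hU_disj.eq (Set.not_disjoint_iff.2 ⟨x, hU_of_ne k x hk, hU_of_ne l x hl⟩)

namespace IsFreeTVS

variable {X : Type u} [TopologicalSpace X] {V : Type v} [AddCommGroup V] [Module ℝ V]
  [TopologicalSpace V] [IsTopologicalAddGroup V] [ContinuousSMul ℝ V] {i : X → V}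
  {E : Type} [AddCommGroup E] [Module ℝ E] [TopologicalSpace E] [IsTopologicalAddGroup E]
  [ContinuousSMul ℝ E]

theorem existsUnique_lift (hV : IsFreeTVS.{u, v, w} V i) {f : X → E} (hf : Continuous f) :
    ∃! g : V →L[ℝ] E, ∀ x, g (i x) = f x := by
  let e : ULift.{w} E ≃L[ℝ] E := ContinuousLinearEquiv.ulift
  obtain ⟨g, hg, hg_unique⟩ := hV.2 (ULift.{w} E) (e.symm ∘ f) (e.symm.continuous.comp hf)
  refine ⟨(e : ULift.{w} E →L[ℝ] E).comp g, fun x => by simp [hg], fun g' hg' => ?_⟩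
  have : (e.symm : E →L[ℝ] ULift.{w} E).comp g' = g := hg_unique _ fun x => by simp [hg']
  rw [← this, ← ContinuousLinearMap.comp_assoc, ContinuousLinearEquiv.coe_comp_coe_symm,
    ContinuousLinearMap.id_comp]

theorem exists_lift (hV : IsFreeTVS.{u, v, w} V i) {f : X → E} (hf : Continuous f) :
    ∃ g : V →L[ℝ] E, ∀ x, g (i x) = f x :=
  (hV.existsUnique_lift hf).exists

theorem ext (hV : IsFreeTVS.{u, v, w} V i) {g₁ g₂ : V →L[ℝ] E}
    (h : ∀ x, g₁ (i x) = g₂ (i x)) : g₁ = g₂ :=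
  (hV.existsUnique_lift (g₂.continuous.comp hV.1)).unique h fun _ => rfl

theorem span_range_eq_top (hV : IsFreeTVS.{u, v, w} V i) : Submodule.span ℝ (range i) = ⊤ := by
  by_contra hne
  obtain ⟨f, hf, hker⟩ := Submodule.exists_le_ker_of_lt_top _ (lt_top_iff_ne_top.2 hne)
  let f' : V →L[ℝ] IndiscreteReal := ⟨f, continuous_top⟩
  have : f' = 0 := hV.ext fun x => hker (Submodule.subset_span (mem_range_self x))
  exact hf (LinearMap.ext fun v => congr($this v))

theorem nonempty_continuousLinearEquiv_fin [T1Space X] [Finite X]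
    (hV : IsFreeTVS.{u, v, w} V i) : Nonempty (V ≃L[ℝ] (Fin (Nat.card X) → ℝ)) := by
  classical
  let e := Finite.equivFin X
  obtain ⟨g, hg⟩ := hV.exists_lift
    (f := fun x => (Pi.single (e x) 1 : Fin (Nat.card X) → ℝ)) continuous_of_discreteTopology
  let h := Fintype.linearCombination ℝ (i ∘ e.symm)
  have hhg : h ∘ₗ (g : V →ₗ[ℝ] Fin (Nat.card X) → ℝ) = LinearMap.id :=
    LinearMap.ext_on hV.span_range_eq_top (by rintro _ ⟨x, rfl⟩; simp [h, hg])
  refine ⟨.equivOfInverse g ⟨h, h.continuous_of_finiteDimensional⟩ (fun v => congr($hhg v))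
    fun c => ?_⟩
  simp [h, Fintype.linearCombination_apply, hg, ← pi_eq_sum_univ']

theorem metrizableSpace [T1Space X] [Finite X] (hV : IsFreeTVS.{u, v, w} V i) :
    TopologicalSpace.MetrizableSpace V :=
  let ⟨e⟩ := hV.nonempty_continuousLinearEquiv_fin
  e.toHomeomorph.isEmbedding.metrizableSpace

variable {y : ℕ → X} {n m : ℕ → ℕ}

theorem tendsto_atTop_of_tendsto_fanPoint (hV : IsFreeTVS.{u, v, w} V i) {ψ : X → ℝ}
    (hψ : Continuous ψ) (hψy : ∀ l, ψ (y l) = if 0 = l then 1 else 0) (hn : ∀ p, 0 < n p)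
    (h : Tendsto (fun p => fanPoint (i (y 0)) (i ∘ y) (n p) (m p)) atTop (𝓝 0)) :
    Tendsto n atTop atTop := by
  obtain ⟨g, hg⟩ := hV.exists_lift hψ
  have hg_fan (p : ℕ) : g (fanPoint (i (y 0)) (i ∘ y) (n p) (m p)) = (n p : ℝ)⁻¹ := by
    rw [← ContinuousLinearMap.coe_coe, map_fanPoint]
    simp [fanPoint, hg, hψy]
  have h_inv : Tendsto (fun p => (n p : ℝ)⁻¹) atTop (𝓝[>] 0) := by
    refine tendsto_nhdsWithin_iff.2
      ⟨?_, .of_forall fun p => Set.mem_Ioi.2 (inv_pos.2 (Nat.cast_pos.2 (hn p)))⟩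
    simpa using ((g.continuous.tendsto 0).comp h).congr hg_fan
  refine tendsto_natCast_atTop_iff (R := ℝ) |>.1 ?_
  simpa only [Pi.inv_def, inv_inv] using h_inv.inv_tendsto_nhdsGT_zero

theorem not_tendsto_fanPoint (hV : IsFreeTVS.{u, v, w} V i) {ψ : ℕ → X → ℝ}
    (hψ : ∀ l, Continuous (ψ l))
    (hsupp : ∀ x, (Function.support fun l => ψ l x).Subsingleton)
    (hψy : ∀ k l, ψ k (y l) = if k = l then 1 else 0) (hn : Tendsto n atTop atTop)
    (hm : ∀ p, 0 < m p) :
    ¬ Tendsto (fun p => fanPoint (i (y 0)) (i ∘ y) (n p) (m p)) atTop (𝓝 0) := by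
  intro h
  choose P hP using fun k => eventually_atTop.1 (hn.eventually_gt_atTop (2 * k))
  let Ψ k := (Finset.range (P k)).sup m
  have hΨ : ∀ p k, n p ≤ 2 * k → m p ≤ Ψ k := fun p k hpk =>
    Finset.le_sup (Finset.mem_range.2 (lt_of_not_ge fun hp => (hP k p hp).not_ge hpk))
  obtain ⟨g, hg⟩ := hV.exists_lift (E := WeightedFinsupp Ψ)
    (WeightedFinsupp.continuous_ofSupportFinite hψ hsupp)
  have h_coord : ∀ p, ∀ l ∈ Finset.Ioc (n p / 2) (n p),
      WeightedFinsupp.toFinsupp (g (fanPoint (i (y 0)) (i ∘ y) (n p) (m p))) l =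
        (m p : ℝ)⁻¹ := by
    intro p l hl
    let φ : V →ₗ[ℝ] ℝ :=
      Finsupp.lapply l ∘ₗ WeightedFinsupp.toFinsupp.toLinearMap ∘ₗ g.toLinearMap
    change φ _ = _
    rw [map_fanPoint]
    obtain ⟨hl_pos, hl_le⟩ := Finset.mem_Ioc.1 hl
    have hl_mem : l ∈ Finset.Icc 1 (n p) := Finset.mem_Icc.2 ⟨by omega, hl_le⟩
    simp [φ, fanPoint, hg, hψy, Finsupp.ofSupportFinite_coe, hl_mem, show l ≠ 0 by omega]
  have h_lim := ((g.continuous.tendsto 0).comp h).norm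
  rw [map_zero, norm_zero] at h_lim
  obtain ⟨p, hp_small, hp_pos⟩ :=
    ((h_lim.eventually (gt_mem_nhds (by norm_num : (0 : ℝ) < 1 / 4))).and
      (hn.eventually_gt_atTop 0)).exists
  refine hp_small.not_ge (WeightedFinsupp.one_div_four_le_norm hp_pos (hm p) (h_coord p)
    fun l hl => hΨ p l ?_)
  have := (Finset.mem_Ioc.1 hl).1
  omega

theorem not_frechetUrysohnSpace [T35Space X] [Infinite X] (hV : IsFreeTVS.{u, v, w} V i) :
    ¬ FrechetUrysohnSpace V := by
  intro
  obtain ⟨y, ψ, hψ, hψy, hsupp⟩ := exists_seq_bump_functions X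
  obtain ⟨a, ha, ha_lim⟩ :=
    mem_closure_iff_seq_limit.1 (zero_mem_closure_fanPoint (i (y 0)) (i ∘ y))
  choose n m hn hm ha_eq using ha
  obtain rfl : a = fun p => fanPoint (i (y 0)) (i ∘ y) (n p) (m p) :=
    funext fun p => (ha_eq p).symm
  exact hV.not_tendsto_fanPoint hψ hsupp hψy
    (hV.tendsto_atTop_of_tendsto_fanPoint (hψ 0) (hψy 0) hn ha_lim) hm ha_lim

end IsFreeTVS

/-- For a Tychonoff space `X` with free topological vector space `(V, i)`:
`V` is Fréchet–Urysohn iff `X` is finite, and `V` is metrizable iff `X` is finite. -/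
theorem frechetUrysohn_freeTVS_iff_finite
    {X : Type u} [TopologicalSpace X] [T35Space X]
    (V : Type v) [AddCommGroup V] [Module ℝ V] [TopologicalSpace V]
    [IsTopologicalAddGroup V] [ContinuousSMul ℝ V] (i : X → V)
    (hV : IsFreeTVS V i) :
    (FrechetUrysohnSpace V ↔ Finite X) ∧
      (TopologicalSpace.MetrizableSpace V ↔ Finite X) := by
  have h_finite : FrechetUrysohnSpace V → Finite X := fun h =>
    not_infinite_iff_finite.1 fun _ => hV.not_frechetUrysohnSpace h
  have h_metrizable : Finite X → TopologicalSpace.MetrizableSpace V := fun _ => hV.metrizableSpace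
  exact ⟨⟨h_finite, fun hX => have := h_metrizable hX; inferInstance⟩,
    ⟨fun _ => h_finite inferInstance, h_metrizable⟩⟩
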